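/- arXiv:2402.04413 — 13 statements merged into one kernel-verified Lean document; each statement's English description precedes it below -/
import Mathlib

section
/- Let S be a numerical semigroup, d a positive integer, and T, T' numerical semigroups with T/d = T'/d = S and T ⊊ T'. If f = max(T' \ T), then T ∪ {f} is a numerical semigroup with (T ∪ {f})/d = S. -/
open scoped Pointwise

/-- A numerical semigroup: a submonoid of (ℕ,+) with finite complement. -/
def IsNumSgp (S : Set ℕ) : Prop :=
  0 ∈ S ∧ (∀ a ∈ S, ∀ b ∈ S, a + b ∈ S) ∧ (Sᶜ : Set ℕ).Finite

/-- The quotient T/d = {x ∈ ℕ : d·x ∈ T}. -/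
def quot (T : Set ℕ) (d : ℕ) : Set ℕ := {x | d * x ∈ T}

/-- Frobenius number: the largest natural number not in S (0 if S = ℕ). -/
noncomputable def Frob (S : Set ℕ) : ℕ := sSup (Sᶜ : Set ℕ)

/-- d·A = {d·a : a ∈ A}. -/
def dmul (d : ℕ) (A : Set ℕ) : Set ℕ := (fun a => d * a) '' A

/-- M_d(S): the set of numerical semigroups T with T/d = S. -/
def Md (S : Set ℕ) (d : ℕ) : Set (Set ℕ) := {T | IsNumSgp T ∧ quot T d = S}

/-- Pseudo-Frobenius numbers of T. -/
def PF (T : Set ℕ) : Set ℕ := {z | z ∉ T ∧ ∀ t ∈ T, t ≠ 0 → z + t ∈ T}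

/-- The minimal system of generators of a submonoid M of ℕ:
nonzero elements not expressible as a sum of two nonzero elements of M. -/
def msg (M : Set ℕ) : Set ℕ :=
  {x | x ∈ M ∧ x ≠ 0 ∧ ∀ a ∈ M, ∀ b ∈ M, a ≠ 0 → b ≠ 0 → a + b ≠ x}

/-- The submonoid of (ℕ,+) generated by X, as a set. -/
def gen (X : Set ℕ) : Set ℕ := (AddSubmonoid.closure X : AddSubmonoid ℕ)

/-- Irreducible: not an intersection of two numerical semigroups properly containing it. -/
def Irr (S : Set ℕ) : Prop :=
  ¬ ∃ A B : Set ℕ, IsNumSgp A ∧ IsNumSgp B ∧ S ⊂ A ∧ S ⊂ B ∧ S = A ∩ B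

/-- S viewed as a set of integers. -/
def NatSet (S : Set ℕ) : Set ℤ := {z | ∃ n ∈ S, (n : ℤ) = z}

/-- Symmetric: for every integer z ∉ S, F(S) − z ∈ S. -/
def SymNS (S : Set ℕ) : Prop :=
  ∀ z : ℤ, z ∉ NatSet S → (Frob S : ℤ) - z ∈ NatSet S

/-
If `f` is the largest element of `T' \ T`, then every element of `T'` above `f` lies in `T`.
Since `f + t` for `0 ≠ t ∈ T` and `2f` are elements of `T'` larger than `f`, they lie in `T`,
so `f` is a pseudo-Frobenius number of `T` with `2f ∈ T`, which is exactly what makes `T ∪ {f}`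
a numerical semigroup. Finally `T ⊆ T ∪ {f} ⊆ T'`, and `T/d = T'/d` forces `(T ∪ {f})/d` to equal
the same set.
-/

namespace IsNumSgp

variable {T T' : Set ℕ}

theorem union_singleton_of_mem_PF {f : ℕ} (hT : IsNumSgp T) (hf : f ∈ PF T) (h2f : f + f ∈ T) :
    IsNumSgp (T ∪ {f}) := by
  obtain ⟨hT0, hTadd, hTfin⟩ := hT
  obtain ⟨hfT, hfadd⟩ := hf
  have hfadd' : ∀ t ∈ T, f + t ∈ T ∪ {f} := fun t ht => by
    rcases eq_or_ne t 0 with rfl | ht0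
    · simp
    · exact Or.inl (hfadd t ht ht0)
  refine ⟨Or.inl hT0, ?_, hTfin.subset fun x hx => fun hxT => hx (Or.inl hxT)⟩
  rintro a (ha | rfl) b (hb | rfl)
  · exact Or.inl (hTadd a ha b hb)
  · exact add_comm b a ▸ hfadd' a ha
  · exact hfadd' b hb
  · exact Or.inl h2f

theorem sSup_diff_mem (hT : IsNumSgp T) (hss : T ⊂ T') : sSup (T' \ T) ∈ T' \ T :=
  (Set.nonempty_of_ssubset hss).csSup_mem (hT.2.2.subset fun _ hx => hx.2)

theorem mem_of_sSup_diff_lt (hT : IsNumSgp T) {a : ℕ} (ha : a ∈ T') (hlt : sSup (T' \ T) < a) :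
    a ∈ T := by
  by_contra haT
  exact hlt.not_ge (le_csSup (hT.2.2.subset fun _ hx => hx.2).bddAbove ⟨ha, haT⟩)

theorem sSup_diff_mem_PF (hT : IsNumSgp T) (hT' : IsNumSgp T') (hss : T ⊂ T') :
    sSup (T' \ T) ∈ PF T ∧ sSup (T' \ T) + sSup (T' \ T) ∈ T := by
  obtain ⟨hfT', hfT⟩ := hT.sSup_diff_mem hss
  have hfpos : 0 < sSup (T' \ T) := Nat.pos_of_ne_zero fun h => hfT (h ▸ hT.1)
  refine ⟨⟨hfT, fun t ht ht0 => ?_⟩, ?_⟩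
  · exact hT.mem_of_sSup_diff_lt (hT'.2.1 _ hfT' t (hss.1 ht)) (by omega)
  · exact hT.mem_of_sSup_diff_lt (hT'.2.1 _ hfT' _ hfT') (by omega)

end IsNumSgp

theorem quot_mono {T U : Set ℕ} (h : T ⊆ U) (d : ℕ) : quot T d ⊆ quot U d :=
  fun _ hx => h hx

theorem quot_eq_of_subset_of_subset {T U T' : Set ℕ} {d : ℕ} (hTU : T ⊆ U) (hUT' : U ⊆ T')
    (h : quot T d = quot T' d) : quot U d = quot T d :=
  (h ▸ quot_mono hUT' d).antisymm (quot_mono hTU d)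

theorem stmt1_general (S T T' : Set ℕ) (d : ℕ)
    (hT : IsNumSgp T) (hT' : IsNumSgp T')
    (h1 : quot T d = S) (h2 : quot T' d = S) (hss : T ⊂ T')
    (f : ℕ) (hf : f = sSup (T' \ T)) :
    IsNumSgp (T ∪ {f}) ∧ quot (T ∪ {f}) d = S := by
  subst hf
  obtain ⟨hPF, h2f⟩ := hT.sSup_diff_mem_PF hT' hss
  have hfT' : sSup (T' \ T) ∈ T' := (hT.sSup_diff_mem hss).1
  refine ⟨hT.union_singleton_of_mem_PF hPF h2f, ?_⟩
  have hsub : T ∪ {sSup (T' \ T)} ⊆ T' := Set.union_subset hss.1 (Set.singleton_subset_iff.2 hfT')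
  rw [quot_eq_of_subset_of_subset Set.subset_union_left hsub (h1.trans h2.symm), h1]

theorem stmt1 (S T T' : Set ℕ) (d : ℕ) (hd : 0 < d)
    (hS : IsNumSgp S) (hT : IsNumSgp T) (hT' : IsNumSgp T')
    (h1 : quot T d = S) (h2 : quot T' d = S) (hss : T ⊂ T')
    (f : ℕ) (hf : f = sSup (T' \ T)) :
    IsNumSgp (T ∪ {f}) ∧ quot (T ∪ {f}) d = S :=
  stmt1_general S T T' d hT hT' h1 h2 hss f hf
end

section
/- Let S be a numerical semigroup, d a positive integer, and T a numerical semigroup with T/d = S. Then T ∪ {d·F(S) + i : i ∈ ℕ, i ≥ 1} is a numerical semigroup whose quotient by d equals S, where F(S) = max(ℤ \ S) is the Frobenius number of S (assume S ≠ ℕ). -/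
open scoped Pointwise

/-! Every integer above `d·F(S)` can be added to `T` because such a set absorbs sums with anything
in `ℕ`; dividing by `d` it only contributes integers above `F(S)`, and these already lie in `S`. -/

lemma IsNumSgp.union_Ioi {T : Set ℕ} (hT : IsNumSgp T) (m : ℕ) : IsNumSgp (T ∪ Set.Ioi m) := by
  refine ⟨Or.inl hT.1, ?_, hT.2.2.subset (Set.compl_subset_compl.2 Set.subset_union_left)⟩
  rintro a (ha | ha) b (hb | hb)
  · exact Or.inl (hT.2.1 a ha b hb)
  all_goals
    right
    simp only [Set.mem_Ioi] at *
    omega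

lemma IsNumSgp.Ioi_frob_subset {S : Set ℕ} (hS : IsNumSgp S) : Set.Ioi (Frob S) ⊆ S := by
  intro x hx
  by_contra hxS
  exact not_le.2 hx (le_csSup hS.2.2.bddAbove hxS)

lemma quot_union (A B : Set ℕ) (d : ℕ) : quot (A ∪ B) d = quot A d ∪ quot B d := rfl

lemma quot_Ioi_mul {d : ℕ} (hd : 0 < d) (m : ℕ) : quot (Set.Ioi (d * m)) d = Set.Ioi m := by
  ext x
  simp only [quot, Set.mem_ofPred_eq, Set.mem_Ioi, Nat.mul_lt_mul_left hd]

lemma setOf_exists_pos_add_eq_Ioi (m : ℕ) :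
    {n : ℕ | ∃ i : ℕ, 1 ≤ i ∧ n = m + i} = Set.Ioi m := by
  ext n
  simp only [Set.mem_ofPred_eq, Set.mem_Ioi]
  exact ⟨fun ⟨i, hi, hn⟩ => by omega, fun hn => ⟨n - m, by omega, by omega⟩⟩

theorem stmt2_general (S T : Set ℕ) (d : ℕ) (hd : 0 < d)
    (hS : IsNumSgp S)
    (hT : IsNumSgp T) (h : quot T d = S) :
    IsNumSgp (T ∪ {n : ℕ | ∃ i : ℕ, 1 ≤ i ∧ n = d * Frob S + i}) ∧
      quot (T ∪ {n : ℕ | ∃ i : ℕ, 1 ≤ i ∧ n = d * Frob S + i}) d = S := by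
  rw [setOf_exists_pos_add_eq_Ioi]
  refine ⟨hT.union_Ioi _, ?_⟩
  rw [quot_union, quot_Ioi_mul hd, h, Set.union_eq_left.2 hS.Ioi_frob_subset]

theorem stmt2 (S T : Set ℕ) (d : ℕ) (hd : 0 < d)
    (hS : IsNumSgp S) (hSne : S ≠ Set.univ)
    (hT : IsNumSgp T) (h : quot T d = S) :
    IsNumSgp (T ∪ {n : ℕ | ∃ i : ℕ, 1 ≤ i ∧ n = d * Frob S + i}) ∧
      quot (T ∪ {n : ℕ | ∃ i : ℕ, 1 ≤ i ∧ n = d * Frob S + i}) d = S :=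
  stmt2_general S T d hd hS hT h
end

section
/- Let S ≠ ℕ be a numerical semigroup and d a positive integer. If T is a maximal element (under inclusion) of the set M_d(S) = {T numerical semigroup : T/d = S}, then F(T) = d·F(S). -/
open scoped Pointwise

/-!
Since `F(S) ∉ S = T/d`, the gap `d·F(S)` of `T` gives `d·F(S) ≤ F(T)`. If the inequality were
strict, adjoining `F(T)` to `T` would give a larger numerical semigroup with the same quotient by `d`:
a multiple `d·x = F(T)` has `x > F(S)`, so `x` already lies in `T/d`. Maximality of `T` forbids this.
-/

open Set

theorem le_Frob_of_notMem {S : Set ℕ} (hS : Sᶜ.Finite) {n : ℕ} (hn : n ∉ S) : n ≤ Frob S :=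
  le_csSup hS.bddAbove hn

theorem mem_of_Frob_lt {S : Set ℕ} (hS : Sᶜ.Finite) {n : ℕ} (hn : Frob S < n) : n ∈ S :=
  not_imp_comm.mp (le_Frob_of_notMem hS) hn.not_ge

theorem Frob_notMem {S : Set ℕ} (hS : Sᶜ.Finite) (hne : S ≠ univ) : Frob S ∉ S :=
  Nat.sSup_mem (nonempty_compl.mpr hne) hS.bddAbove

theorem IsNumSgp.insert_of_forall_lt_mem {T : Set ℕ} (hT : IsNumSgp T) {f : ℕ}
    (hf : ∀ n, f < n → n ∈ T) : IsNumSgp (insert f T) := by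
  obtain ⟨hT0, hTadd, hTfin⟩ := hT
  have hge : ∀ n, f ≤ n → n ∈ insert f T := fun n hn =>
    hn.eq_or_lt.elim (fun h => h ▸ mem_insert f T) (fun h => mem_insert_of_mem f (hf n h))
  refine ⟨mem_insert_of_mem f hT0, ?_, hTfin.subset (compl_subset_compl.mpr (subset_insert f T))⟩
  rintro a (rfl | ha) b (rfl | hb)
  iterate 3 exact hge _ (by omega)
  exact mem_insert_of_mem f (hTadd a ha b hb)

theorem quot_insert_of_mul_lt {T : Set ℕ} {d F f : ℕ} (hT : ∀ x, F < x → x ∈ quot T d)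
    (hf : d * F < f) : quot (insert f T) d = quot T d := by
  ext x
  refine ⟨?_, Or.inr⟩
  rintro (hx | hx)
  · exact hT x (Nat.lt_of_mul_lt_mul_left (by omega : d * F < d * x))
  · exact hx

theorem stmt3_general (S : Set ℕ) (d : ℕ)
    (hS : IsNumSgp S) (hSne : S ≠ Set.univ)
    (T : Set ℕ) (hT : T ∈ Md S d)
    (hmax : ∀ T' ∈ Md S d, T ⊆ T' → T' = T) :
    Frob T = d * Frob S := by
  obtain ⟨hTsgp, rfl⟩ := hT
  have hdF : d * Frob (quot T d) ∉ T := Frob_notMem hS.2.2 hSne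
  refine le_antisymm ?_ (le_Frob_of_notMem hTsgp.2.2 hdF)
  by_contra! hlt
  have hT' : insert (Frob T) T ∈ Md (quot T d) d :=
    ⟨hTsgp.insert_of_forall_lt_mem fun _ => mem_of_Frob_lt hTsgp.2.2,
      quot_insert_of_mul_lt (fun _ => mem_of_Frob_lt hS.2.2) hlt⟩
  exact Frob_notMem hTsgp.2.2 ((ne_univ_iff_exists_notMem T).mpr ⟨_, hdF⟩)
    ((hmax _ hT' (subset_insert _ _)).subset (mem_insert _ _))

theorem stmt3 (S : Set ℕ) (d : ℕ) (hd : 0 < d)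
    (hS : IsNumSgp S) (hSne : S ≠ Set.univ)
    (T : Set ℕ) (hT : T ∈ Md S d)
    (hmax : ∀ T' ∈ Md S d, T ⊆ T' → T' = T) :
    Frob T = d * Frob S :=
  stmt3_general S d hS hSne T hT hmax
end

section
/- Let S be a numerical semigroup and d a positive integer. If there exists a numerical semigroup T with T/d = S, T irreducible, and F(T) = d·F(S), then S is irreducible. -/
open scoped Pointwise

/-!
Irreducibility of a numerical semigroup `S` is equivalent to: for every gap `x` with `2x ≠ F(S)`,
`F(S) - x ∈ S`. If `x` is such a gap of `S = T/d`, then `dx` is a gap of `T` and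
`2dx ≠ d F(S) = F(T)`, so irreducibility of `T` gives `d (F(S) - x) = F(T) - dx ∈ T`,
that is, `F(S) - x ∈ S`.
-/

namespace IsNumSgp

variable {T : Set ℕ}

lemma le_frob (hT : IsNumSgp T) {z : ℕ} (hz : z ∉ T) : z ≤ Frob T :=
  le_csSup hT.2.2.bddAbove hz

lemma frob_notMem (hT : IsNumSgp T) {z : ℕ} (hz : z ∉ T) : Frob T ∉ T :=
  Set.Nonempty.csSup_mem ⟨z, hz⟩ hT.2.2

lemma mem_of_frob_lt (hT : IsNumSgp T) {z : ℕ} (hz : Frob T < z) : z ∈ T :=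
  of_not_not fun h => (hT.le_frob h).not_gt hz

lemma union_singleton (hT : IsNumSgp T) {m : ℕ}
    (hadd : ∀ t ∈ T, t ≠ 0 → m + t ∈ T) (hdouble : m + m ∈ T) : IsNumSgp (T ∪ {m}) := by
  have hadd' : ∀ t ∈ T, m + t ∈ T ∪ {m} := fun t ht => by
    rcases eq_or_ne t 0 with rfl | ht0
    · exact Or.inr rfl
    · exact Or.inl (hadd t ht ht0)
  refine ⟨Or.inl hT.1, ?_, hT.2.2.subset fun z hz hzT => hz (Or.inl hzT)⟩
  rintro a (ha | rfl) b (hb | rfl)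
  · exact Or.inl (hT.2.1 a ha b hb)
  · exact add_comm b a ▸ hadd' a ha
  · exact hadd' b hb
  · exact Or.inl hdouble

lemma union_frob (hT : IsNumSgp T) : IsNumSgp (T ∪ {Frob T}) := by
  refine hT.union_singleton (fun t _ ht0 => hT.mem_of_frob_lt (by omega)) ?_
  rcases Nat.eq_zero_or_pos (Frob T) with h0 | hpos
  · exact h0 ▸ hT.1
  · exact hT.mem_of_frob_lt (by omega)

lemma add_mem_of_max_gap (hT : IsNumSgp T) {m : ℕ} (hm : Frob T - m ∉ T)
    (hmax : ∀ z, z ∉ T → Frob T - z ∉ T → z ≤ m) : ∀ t ∈ T, t ≠ 0 → m + t ∈ T := by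
  intro t ht ht0
  by_contra hmt
  have hle : m + t ≤ Frob T := hT.le_frob hmt
  have hmirror : Frob T - (m + t) ∉ T := fun h =>
    hm (show Frob T - m = Frob T - (m + t) + t by omega ▸ hT.2.1 _ h _ ht)
  have := hmax _ hmt hmirror
  omega

end IsNumSgp

lemma Irr.eq_of_isNumSgp_union {T : Set ℕ} (hirr : Irr T) {a b : ℕ} (ha : a ∉ T) (hb : b ∉ T)
    (hA : IsNumSgp (T ∪ {a})) (hB : IsNumSgp (T ∪ {b})) : a = b := by
  by_contra hab
  refine hirr ⟨T ∪ {a}, T ∪ {b}, hA, hB, Set.ssubset_iff_of_subset Set.subset_union_left |>.2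
    ⟨a, Or.inr rfl, ha⟩, Set.ssubset_iff_of_subset Set.subset_union_left |>.2 ⟨b, Or.inr rfl, hb⟩, ?_⟩
  ext y
  simp only [Set.mem_inter_iff, Set.mem_union, Set.mem_singleton_iff]
  constructor
  · exact fun h => ⟨Or.inl h, Or.inl h⟩
  · rintro ⟨hy | hya, hy' | hyb⟩
    exacts [hy, hy, hy', absurd (hya.symm.trans hyb) hab]

/-- If `x` and `F - x` are both gaps, the largest such gap `m` exceeds `F / 2`; then `T ∪ {m}` and
`T ∪ {F}` are two distinct one-gap extensions, which an irreducible semigroup cannot have. -/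
lemma IsNumSgp.frob_sub_mem_of_irr {T : Set ℕ} (hT : IsNumSgp T) (hirr : Irr T) {x : ℕ}
    (hx : x ∉ T) (h2x : 2 * x ≠ Frob T) : Frob T - x ∈ T := by
  by_contra hFx
  set F := Frob T
  set C : Set ℕ := {z | z ∉ T ∧ F - z ∉ T}
  have hxF : x ≤ F := hT.le_frob hx
  have hxC : x ∈ C := ⟨hx, hFx⟩
  have hFxC : F - x ∈ C := ⟨hFx, by rwa [show F - (F - x) = x by omega]⟩
  obtain ⟨m, ⟨hmT, hFm⟩, hmax⟩ :=
    Set.exists_max_image C id (hT.2.2.subset fun z hz => hz.1) ⟨x, hxC⟩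
  have hxm : x ≤ m := hmax x hxC
  have hFxm : F - x ≤ m := hmax _ hFxC
  have hmF : m ≤ F := hT.le_frob hmT
  have hB : IsNumSgp (T ∪ {m}) :=
    hT.union_singleton (hT.add_mem_of_max_gap hFm fun z hz hFz => hmax z ⟨hz, hFz⟩)
      (hT.mem_of_frob_lt (by omega))
  have hmeq : m = F := hirr.eq_of_isNumSgp_union hmT (hT.frob_notMem hx) hB hT.union_frob
  exact hFm (by rw [hmeq, Nat.sub_self]; exact hT.1)

lemma frob_mem_of_superset {S A : Set ℕ} (hS : IsNumSgp S) (hA : IsNumSgp A)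
    (h : ∀ x, x ∉ S → 2 * x ≠ Frob S → Frob S - x ∈ S) (hSA : S ⊆ A) {a : ℕ}
    (haA : a ∈ A) (haS : a ∉ S) : Frob S ∈ A := by
  have haF : a ≤ Frob S := hS.le_frob haS
  rcases eq_or_ne (2 * a) (Frob S) with h2 | h2
  · exact show a + a = Frob S by omega ▸ hA.2.1 a haA a haA
  · exact show a + (Frob S - a) = Frob S by omega ▸ hA.2.1 a haA _ (hSA (h a haS h2))

lemma irr_of_frob_sub_mem {S : Set ℕ} (hS : IsNumSgp S)
    (h : ∀ x, x ∉ S → 2 * x ≠ Frob S → Frob S - x ∈ S) : Irr S := by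
  rintro ⟨A, B, hA, hB, hSA, hSB, hint⟩
  obtain ⟨a, haA, haS⟩ := Set.exists_of_ssubset hSA
  obtain ⟨b, hbB, hbS⟩ := Set.exists_of_ssubset hSB
  have hmem : Frob S ∈ A ∩ B :=
    ⟨frob_mem_of_superset hS hA h hSA.1 haA haS, frob_mem_of_superset hS hB h hSB.1 hbB hbS⟩
  exact hS.frob_notMem haS (hint ▸ hmem)

theorem stmt5 (S : Set ℕ) (d : ℕ) (hd : 0 < d) (hS : IsNumSgp S)
    (T : Set ℕ) (hT : IsNumSgp T) (hq : quot T d = S)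
    (hirr : Irr T) (hF : Frob T = d * Frob S) :
    Irr S := by
  subst hq
  refine irr_of_frob_sub_mem hS fun x hx h2x => ?_
  have h2dx : 2 * (d * x) ≠ Frob T := by
    rw [hF, mul_left_comm]
    exact fun h => h2x (Nat.eq_of_mul_eq_mul_left hd h)
  have hmirror := hT.frob_sub_mem_of_irr hirr hx h2dx
  rwa [hF, ← Nat.mul_sub] at hmirror
end

section
/- Let S ≠ ℕ be a numerical semigroup, d a positive integer, and T a non-maximal element of M_d(S). Then max{x ∈ ℕ \ T : T ∪ {x} ∈ M_d(S)} equals max{z ∈ PF(T) : 2z ∈ T and z ∉ d·(ℕ \ S)}. -/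
/-!
Both sets are in fact equal. Adjoining a gap `x` to a numerical semigroup `T` yields a numerical
semigroup exactly when `x + t` stays in `T` for every nonzero `t ∈ T` (so `x ∈ PF T`) and
`2x ∈ T`; and it leaves the quotient `T/d = S` unchanged exactly when `x` is not `d` times a gap
of `S`, since the only new candidates for `T/d` are the `y` with `d * y = x`.
-/

open scoped Pointwise

lemma quot_union_singleton_eq_iff {S T : Set ℕ} {d x : ℕ} (hT : quot T d = S) :
    quot (T ∪ {x}) d = S ↔ x ∉ dmul d Sᶜ := by
  subst hT
  refine ⟨fun h ⟨y, hy, hyx⟩ => hy ?_, fun hx => ?_⟩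
  · rw [← h]
    exact .inr hyx
  · refine Set.Subset.antisymm (fun y hy => hy.elim id fun hyx => ?_) fun y hy => .inl hy
    by_contra hy
    exact hx ⟨y, hy, hyx⟩

lemma isNumSgp_union_singleton_iff {T : Set ℕ} (hT : IsNumSgp T) {x : ℕ} (hx : x ∉ T) :
    IsNumSgp (T ∪ {x}) ↔ x ∈ PF T ∧ 2 * x ∈ T := by
  obtain ⟨hT0, hTadd, hTfin⟩ := hT
  have hx0 : x ≠ 0 := fun h => hx (h ▸ hT0)
  constructor
  · rintro ⟨-, hadd, -⟩
    have hmemT {y : ℕ} (hy : y ∈ T ∪ {x}) (hyx : y ≠ x) : y ∈ T :=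
      hy.resolve_right hyx
    refine ⟨⟨hx, fun t ht ht0 => hmemT (hadd x (.inr rfl) t (.inl ht)) (by omega)⟩, ?_⟩
    rw [two_mul]
    exact hmemT (hadd x (.inr rfl) x (.inr rfl)) (by omega)
  · rintro ⟨⟨-, hPF⟩, h2x⟩
    have hxadd {t : ℕ} (ht : t ∈ T) : x + t ∈ T ∪ {x} := by
      rcases eq_or_ne t 0 with rfl | ht0
      · exact .inr rfl
      · exact .inl (hPF t ht ht0)
    refine ⟨.inl hT0, ?_, hTfin.subset (Set.compl_subset_compl.2 Set.subset_union_left)⟩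
    rintro a (ha | ha) b (hb | hb)
    · exact .inl (hTadd a ha b hb)
    · rw [Set.mem_singleton_iff.1 hb, add_comm]
      exact hxadd ha
    · rw [Set.mem_singleton_iff.1 ha]
      exact hxadd hb
    · rw [Set.mem_singleton_iff.1 ha, Set.mem_singleton_iff.1 hb, ← two_mul]
      exact .inl h2x

lemma union_singleton_mem_Md_iff {S T : Set ℕ} {d x : ℕ} (hT : T ∈ Md S d) (hx : x ∉ T) :
    T ∪ {x} ∈ Md S d ↔ x ∈ PF T ∧ 2 * x ∈ T ∧ x ∉ dmul d Sᶜ := by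
  rw [Md, Set.mem_ofPred_eq, isNumSgp_union_singleton_iff hT.1 hx,
    quot_union_singleton_eq_iff hT.2, and_assoc]

theorem stmt7_general (S : Set ℕ) (d : ℕ)
    (T : Set ℕ) (hT : T ∈ Md S d) :
    sSup {x | x ∉ T ∧ T ∪ {x} ∈ Md S d} =
      sSup {z | z ∈ PF T ∧ 2 * z ∈ T ∧ z ∉ dmul d Sᶜ} := by
  congr 1
  ext x
  constructor
  · rintro ⟨hx, hmem⟩
    exact (union_singleton_mem_Md_iff hT hx).1 hmem
  · intro hz
    exact ⟨hz.1.1, (union_singleton_mem_Md_iff hT hz.1.1).2 hz⟩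

theorem stmt7 (S : Set ℕ) (d : ℕ) (hd : 0 < d)
    (hS : IsNumSgp S) (hSne : S ≠ Set.univ)
    (T : Set ℕ) (hT : T ∈ Md S d) (hnm : ∃ T' ∈ Md S d, T ⊂ T') :
    sSup {x | x ∉ T ∧ T ∪ {x} ∈ Md S d} =
      sSup {z | z ∈ PF T ∧ 2 * z ∈ T ∧ z ∉ dmul d Sᶜ} :=
  stmt7_general S d T hT
end

section
/- Let S ≠ ℕ be a numerical semigroup, d a positive integer, and T ∈ M_d(S). If x is a minimal generator of T with x ∉ d·S and x > F(T), then max{y ∈ ℕ \ (T \ {x}) : (T \ {x}) ∪ {y} ∈ M_d(S)} = x. -/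
open scoped Pointwise

lemma mem_of_frob_lt {T : Set ℕ} (hT : (Tᶜ : Set ℕ).Finite) {n : ℕ} (hn : Frob T < n) :
    n ∈ T := by
  by_contra hnT
  exact hn.not_ge (le_csSup hT.bddAbove hnT)

lemma isGreatest_readd_of_forall_gt_mem {T : Set ℕ} {x : ℕ} (P : Set ℕ → Prop)
    (hxT : x ∈ T) (hgt : ∀ n, x < n → n ∈ T) (hP : P T) :
    IsGreatest {y | y ∉ T \ {x} ∧ P (T \ {x} ∪ {y})} x := by
  refine ⟨⟨fun h => h.2 rfl, ?_⟩, fun y hy => ?_⟩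
  · rwa [Set.sdiff_union_of_subset (Set.singleton_subset_iff.mpr hxT)]
  · by_contra! hxy
    exact hy.1 ⟨hgt y hxy, hxy.ne'⟩

theorem stmt9_general (S : Set ℕ) (d : ℕ)
    (T : Set ℕ) (hT : T ∈ Md S d)
    (x : ℕ) (hx : x ∈ msg T) (hxF : Frob T < x) :
    sSup {y | y ∉ T \ {x} ∧ (T \ {x}) ∪ {y} ∈ Md S d} = x :=
  (isGreatest_readd_of_forall_gt_mem (· ∈ Md S d) hx.1
    (fun _ hn => mem_of_frob_lt hT.1.2.2 (hxF.trans hn)) hT).csSup_eq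

theorem stmt9 (S : Set ℕ) (d : ℕ) (hd : 0 < d)
    (hS : IsNumSgp S) (hSne : S ≠ Set.univ)
    (T : Set ℕ) (hT : T ∈ Md S d)
    (x : ℕ) (hx : x ∈ msg T) (hxd : x ∉ dmul d S) (hxF : Frob T < x) :
    sSup {y | y ∉ T \ {x} ∧ (T \ {x}) ∪ {y} ∈ Md S d} = x :=
  stmt9_general S d T hT x hx hxF
end

section
/- Let S ≠ ℕ be a numerical semigroup, d a positive integer, and T ∈ M_d(S). Then d divides F(T) if and only if F(T) = d·F(S). -/
open scoped Pointwise

theorem frob_notMem {S : Set ℕ} (hfin : Sᶜ.Finite) (hne : S ≠ Set.univ) : Frob S ∉ S :=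
  Nat.sSup_mem (Set.nonempty_compl.2 hne) hfin.bddAbove

theorem le_frob {S : Set ℕ} (hfin : Sᶜ.Finite) {x : ℕ} (hx : x ∉ S) : x ≤ Frob S :=
  le_csSup hfin.bddAbove hx

theorem mul_frob_quot_le_frob {T : Set ℕ} {d : ℕ} (hT : Tᶜ.Finite) (hq : (quot T d)ᶜ.Finite)
    (hne : quot T d ≠ Set.univ) : d * Frob (quot T d) ≤ Frob T :=
  le_frob hT (frob_notMem hq hne)

theorem frob_le_mul_frob_quot_of_dvd {T : Set ℕ} {d : ℕ} (hT : Tᶜ.Finite)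
    (hq : (quot T d)ᶜ.Finite) (hne : quot T d ≠ Set.univ) (hdvd : d ∣ Frob T) :
    Frob T ≤ d * Frob (quot T d) := by
  obtain ⟨k, hk⟩ := hdvd
  have hTne : T ≠ Set.univ := by
    rintro rfl
    exact hne (Set.eq_univ_of_forall fun _ => Set.mem_univ _)
  have hk_notMem : k ∉ quot T d := show d * k ∉ T from hk ▸ frob_notMem hT hTne
  rw [hk]
  exact Nat.mul_le_mul_left d (le_frob hq hk_notMem)

theorem stmt10_general (S : Set ℕ) (d : ℕ)
    (hS : IsNumSgp S) (hSne : S ≠ Set.univ)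
    (T : Set ℕ) (hT : T ∈ Md S d) :
    d ∣ Frob T ↔ Frob T = d * Frob S := by
  obtain ⟨hTns, rfl⟩ := hT
  refine ⟨fun hdvd => le_antisymm ?_ ?_, fun h => h ▸ dvd_mul_right d _⟩
  · exact frob_le_mul_frob_quot_of_dvd hTns.2.2 hS.2.2 hSne hdvd
  · exact mul_frob_quot_le_frob hTns.2.2 hS.2.2 hSne

theorem stmt10 (S : Set ℕ) (d : ℕ) (hd : 0 < d)
    (hS : IsNumSgp S) (hSne : S ≠ Set.univ)
    (T : Set ℕ) (hT : T ∈ Md S d) :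
    d ∣ Frob T ↔ Frob T = d * Frob S :=
  stmt10_general S d hS hSne T hT
end

section
/- Let S ≠ ℕ be a numerical semigroup, d a positive integer, and X ⊆ ℕ. The following are equivalent: (1) X is contained in some T ∈ M_d(S); (2) ⟨X⟩ ∩ d·(ℕ \ S) = ∅; (3) (⟨X⟩ + d·S) ∩ d·(ℕ \ S) = ∅; (4) ⟨X⟩ + d·S is an intersection of elements of M_d(S). -/
open scoped Pointwise

/-!
Every `T ∈ M_d(S)` avoids `d·(ℕ \ S)`, which gives the easy implications. Conversely, if
`M = ⟨X⟩ + d·S` avoids `d·(ℕ \ S)` (which follows from `⟨X⟩` avoiding it, since `S` is closed under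
addition), then `M ∪ [c, ∞)` lies in `M_d(S)` for every `c ≥ d·(F(S) + 1)`, and these semigroups
intersect to `M` as `c → ∞`.
-/

namespace IsNumSgp

variable {S : Set ℕ}

def toAddSubmonoid (hS : IsNumSgp S) : AddSubmonoid ℕ where
  carrier := S
  add_mem' ha hb := hS.2.1 _ ha _ hb
  zero_mem' := hS.1

lemma mem_of_frob_lt_s11 (hS : IsNumSgp S) {x : ℕ} (hx : Frob S < x) : x ∈ S := by
  by_contra h
  exact (le_csSup hS.2.2.bddAbove h).not_gt hx

lemma gen_subset (hS : IsNumSgp S) {X : Set ℕ} (hX : X ⊆ S) : gen X ⊆ S :=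
  SetLike.coe_subset_coe.mpr (AddSubmonoid.closure_le (S := hS.toAddSubmonoid).mpr hX)

end IsNumSgp

lemma isNumSgp_union_Ici (N : AddSubmonoid ℕ) (c : ℕ) : IsNumSgp (N ∪ Set.Ici c) := by
  refine ⟨Or.inl N.zero_mem, ?_, (Set.finite_Iio c).subset fun k hk => ?_⟩
  · rintro a (ha | ha) b (hb | hb)
    · exact Or.inl (N.add_mem ha hb)
    all_goals exact Or.inr (by simp only [Set.mem_Ici] at *; omega)
  · simp only [Set.mem_compl_iff, Set.mem_union, Set.mem_Ici, not_or, not_le] at hk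
    exact hk.2

lemma dmul_eq_coe_map (d : ℕ) {S : Set ℕ} (hS : IsNumSgp S) :
    dmul d S = (hS.toAddSubmonoid.map (AddMonoidHom.mulLeft d) : Set ℕ) := by
  rw [AddSubmonoid.coe_map]
  rfl

lemma disjoint_dmul_compl_of_mem_Md {S T : Set ℕ} {d : ℕ} (hT : T ∈ Md S d) :
    Disjoint T (dmul d Sᶜ) := by
  rw [Set.disjoint_right]
  rintro _ ⟨a, ha, rfl⟩ haT
  exact ha (hT.2 ▸ haT)

lemma disjoint_add_dmul {S A : Set ℕ} {d : ℕ} (hd : 0 < d) (hS : IsNumSgp S)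
    (hA : Disjoint A (dmul d Sᶜ)) : Disjoint (A + dmul d S) (dmul d Sᶜ) := by
  rw [Set.disjoint_right]
  rintro _ ⟨b, hb, rfl⟩ ⟨a, haA, _, ⟨s, hs, rfl⟩, hab⟩
  beta_reduce at hab
  have hsb : s ≤ b := Nat.le_of_mul_le_mul_left (by omega) hd
  have hbs : b - s ∉ S := fun h => hb (Nat.sub_add_cancel hsb ▸ hS.2.1 _ h _ hs)
  have ha : a = d * (b - s) := by rw [Nat.mul_sub]; omega
  exact Set.disjoint_left.mp hA haA ⟨b - s, hbs, ha.symm⟩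

lemma quot_union_Ici {S : Set ℕ} {d c : ℕ} (hd : 0 < d) (hS : IsNumSgp S) {M : Set ℕ}
    (hSM : dmul d S ⊆ M) (hM : Disjoint M (dmul d Sᶜ)) (hc : d * (Frob S + 1) ≤ c) :
    quot (M ∪ Set.Ici c) d = S := by
  ext x
  refine ⟨?_, fun hx => Or.inl (hSM ⟨x, hx, rfl⟩)⟩
  rintro (hxM | hxc)
  · by_contra hx
    exact Set.disjoint_left.mp hM hxM ⟨x, hx, rfl⟩
  · refine hS.mem_of_frob_lt_s11 (Nat.lt_of_succ_le (Nat.le_of_mul_le_mul_left ?_ hd))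
    exact hc.trans hxc

lemma iInter_union_Ici_add (M : Set ℕ) (c : ℕ) : ⋂ n, (M ∪ Set.Ici (c + n)) = M := by
  refine Set.Subset.antisymm (fun y hy => ?_) (Set.subset_iInter fun _ => Set.subset_union_left)
  rcases Set.mem_iInter.mp hy (y + 1) with h | h
  · exact h
  · simp only [Set.mem_Ici] at h
    omega

theorem stmt11_general (S : Set ℕ) (d : ℕ) (hd : 0 < d)
    (hS : IsNumSgp S) (X : Set ℕ) :
    ((∃ T ∈ Md S d, X ⊆ T) ↔ gen X ∩ dmul d Sᶜ = ∅)
    ∧ (gen X ∩ dmul d Sᶜ = ∅ ↔ (gen X + dmul d S) ∩ dmul d Sᶜ = ∅)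
    ∧ ((gen X + dmul d S) ∩ dmul d Sᶜ = ∅ ↔
        ∃ 𝒯 : Set (Set ℕ), 𝒯.Nonempty ∧ 𝒯 ⊆ Md S d ∧ gen X + dmul d S = ⋂₀ 𝒯) := by
  simp only [← Set.disjoint_iff_inter_eq_empty]
  set N := AddSubmonoid.closure X ⊔ hS.toAddSubmonoid.map (AddMonoidHom.mulLeft d)
  have hN : gen X + dmul d S = N := by rw [AddSubmonoid.coe_sup, dmul_eq_coe_map d hS]; rfl
  have hXN : gen X ⊆ N := le_sup_left (a := AddSubmonoid.closure X)
  have hSN : dmul d S ⊆ N := dmul_eq_coe_map d hS ▸ le_sup_right (b := hS.toAddSubmonoid.map _)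
  let T (n : ℕ) : Set ℕ := N ∪ Set.Ici (d * (Frob S + 1) + n)
  have hT (n : ℕ) (hdisj : Disjoint (N : Set ℕ) (dmul d Sᶜ)) : T n ∈ Md S d :=
    ⟨isNumSgp_union_Ici N _, quot_union_Ici hd hS hSN hdisj (Nat.le_add_right _ _)⟩
  have h23 : Disjoint (gen X) (dmul d Sᶜ) ↔ Disjoint (gen X + dmul d S) (dmul d Sᶜ) :=
    ⟨disjoint_add_dmul hd hS, fun h => h.mono_left (hN ▸ hXN)⟩
  refine ⟨⟨?_, fun h => ⟨T 0, hT 0 (hN ▸ h23.mp h), ?_⟩⟩, h23, ⟨fun h => ?_, ?_⟩⟩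
  · rintro ⟨U, hU, hXU⟩
    exact (disjoint_dmul_compl_of_mem_Md hU).mono_left (hU.1.gen_subset hXU)
  · exact (AddSubmonoid.subset_closure.trans hXN).trans Set.subset_union_left
  · refine ⟨Set.range T, Set.range_nonempty T, Set.range_subset_iff.mpr fun n => hT n (hN ▸ h), ?_⟩
    rw [Set.sInter_range, iInter_union_Ici_add, hN]
  · rintro ⟨𝒯, ⟨U, hU𝒯⟩, h𝒯, hM⟩
    exact (disjoint_dmul_compl_of_mem_Md (h𝒯 hU𝒯)).mono_left (hM ▸ Set.sInter_subset_of_mem hU𝒯)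

theorem stmt11 (S : Set ℕ) (d : ℕ) (hd : 0 < d)
    (hS : IsNumSgp S) (hSne : S ≠ Set.univ) (X : Set ℕ) :
    ((∃ T ∈ Md S d, X ⊆ T) ↔ gen X ∩ dmul d Sᶜ = ∅)
    ∧ (gen X ∩ dmul d Sᶜ = ∅ ↔ (gen X + dmul d S) ∩ dmul d Sᶜ = ∅)
    ∧ ((gen X + dmul d S) ∩ dmul d Sᶜ = ∅ ↔
        ∃ 𝒯 : Set (Set ℕ), 𝒯.Nonempty ∧ 𝒯 ⊆ Md S d ∧ gen X + dmul d S = ⋂₀ 𝒯) :=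
  stmt11_general S d hd hS X
end

section
/- Let S ≠ ℕ be a numerical semigroup and d a positive integer. A subset T of ℕ is a numerical semigroup with T/d = S if and only if there exists a finite subset X of S such that ⟨X⟩ ∩ d·(ℕ \ S) = ∅, gcd(X ∪ {d}) = 1, and T = ⟨X⟩ + d·S. -/
/-!
If `T/d = S` then `d·S ⊆ T ⊆ S`. Once `T` contains every `n ≥ N`, each large `t ∈ T` splits as
`(N + r) + d·q` with `r < d` and `d·q ≥ N`, so `N + r` is a small element of `T` and `q ∈ T/d`:
thus `T = ⟨X⟩ + d·S` for `X` the elements of `T` below a bound, and `X` contains two consecutive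
integers. Conversely `⟨X⟩ + d·S` is a submonoid containing `X`, `d·n` and `d·(n + 1)` for large
`n`, so its gcd divides `gcd(X ∪ {d}) = 1` and it is cofinite; its quotient by `d` is exactly `S`
because `⟨X⟩` misses `d·(ℕ \ S)`.
-/

open scoped Pointwise

theorem Nat.finset_gcd_eq_one_of_mem_of_succ_mem {X : Finset ℕ} {n : ℕ} (hn : n ∈ X)
    (hn' : n + 1 ∈ X) : X.gcd id = 1 :=
  Nat.dvd_one.mp <| (Nat.dvd_add_right (X.gcd_dvd hn)).mp (X.gcd_dvd hn')

theorem inter_dmul_compl_quot_eq_empty (T : Set ℕ) (d : ℕ) : T ∩ dmul d (quot T d)ᶜ = ∅ :=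
  Set.eq_empty_iff_forall_notMem.mpr fun _ ⟨hT, _, hm, hdm⟩ => hm (by subst hdm; exact hT)

theorem quot_add_dmul {S A : Set ℕ} {d : ℕ} (hd : 0 < d) (hS : ∀ a ∈ S, ∀ b ∈ S, a + b ∈ S)
    (hA : 0 ∈ A) (hAS : A ∩ dmul d Sᶜ = ∅) : quot (A + dmul d S) d = S := by
  ext x
  constructor
  · rintro ⟨a, ha, _, ⟨s, hs, rfl⟩, hx : a + d * s = d * x⟩
    have hsx : s ≤ x := Nat.le_of_mul_le_mul_left (hx ▸ Nat.le_add_left _ _) hd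
    have hxs : x - s ∈ S := by
      by_contra hns
      refine hAS.subset ⟨ha, x - s, hns, ?_⟩
      simp only [Nat.mul_sub, ← hx, Nat.add_sub_cancel]
    simpa [Nat.sub_add_cancel hsx] using hS _ hxs _ hs
  · intro hx
    exact ⟨0, hA, d * x, ⟨x, hx, rfl⟩, zero_add _⟩

section NumericalSemigroup

variable {T : Set ℕ}

def IsNumSgp.toAddSubmonoid_s12 (hT : IsNumSgp T) : AddSubmonoid ℕ where
  carrier := T
  zero_mem' := hT.1
  add_mem' ha hb := hT.2.1 _ ha _ hb

theorem IsNumSgp.exists_forall_ge_mem (hT : IsNumSgp T) : ∃ N, ∀ n ≥ N, n ∈ T := by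
  obtain ⟨N, hN⟩ := hT.2.2.bddAbove
  exact ⟨N + 1, fun n hn => by_contra fun hnT => by have := hN hnT; omega⟩

theorem IsNumSgp.gen_subset_s12 (hT : IsNumSgp T) {X : Set ℕ} (hX : X ⊆ T) : gen X ⊆ T :=
  fun _ hx => (AddSubmonoid.closure_le (S := hT.toAddSubmonoid_s12)).mpr hX hx

theorem IsNumSgp.subset_quot (hT : IsNumSgp T) (d : ℕ) : T ⊆ quot T d := fun t ht =>
  show d * t ∈ T from smul_eq_mul d t ▸ hT.toAddSubmonoid_s12.nsmul_mem ht d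

theorem isNumSgp_of_setGcd_eq_one (M : AddSubmonoid ℕ) (hM : Nat.setGcd M = 1) :
    IsNumSgp M := by
  refine ⟨M.zero_mem, fun a ha b hb => M.add_mem ha hb, ?_⟩
  obtain ⟨N, hN⟩ := Nat.exists_mem_closure_of_ge (M : Set ℕ)
  refine (Set.finite_Iio N).subset fun n hn => ?_
  by_contra hge
  rw [AddSubmonoid.closure_eq] at hN
  exact hn (hN n (not_lt.mp hge) (hM ▸ one_dvd n))

theorem IsNumSgp.eq_gen_inter_Iio_add_dmul_quot (hT : IsNumSgp T) {d N C : ℕ}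
    (hd : 0 < d) (hN : ∀ n ≥ N, n ∈ T) (hC : N + d * (N + 1) ≤ C) :
    T = gen (T ∩ Set.Iio C) + dmul d (quot T d) := by
  refine subset_antisymm (fun t ht => ?_) ?_
  · by_cases htC : t < C
    · exact ⟨t, AddSubmonoid.subset_closure ⟨ht, htC⟩, 0, ⟨0, by simpa [quot] using hT.1, rfl⟩,
        add_zero t⟩
    set q := (t - N) / d
    set r := (t - N) % d
    have hr : r < d := Nat.mod_lt _ hd
    have hqr : d * q + r = t - N := Nat.div_add_mod _ _
    have hdN : N ≤ d * N := Nat.le_mul_of_pos_left N hd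
    have hdC : d ≤ d * (N + 1) := Nat.le_mul_of_pos_right d (Nat.succ_pos N)
    rw [mul_add_one] at hC hdC
    have hq : N ≤ d * q := by omega
    have hrC : N + r < C := by omega
    exact (show N + r + d * q = t by omega) ▸ Set.add_mem_add
      (AddSubmonoid.subset_closure ⟨hN _ (Nat.le_add_right _ _), hrC⟩) ⟨q, hN _ hq, rfl⟩
  · rintro _ ⟨a, ha, _, ⟨s, hs, rfl⟩, rfl⟩
    exact hT.2.1 _ (hT.gen_subset_s12 Set.inter_subset_left ha) _ hs

theorem IsNumSgp.exists_finset_eq_gen_add_dmul_quot (hT : IsNumSgp T) {d : ℕ}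
    (hd : 0 < d) :
    ∃ X : Finset ℕ, ↑X ⊆ quot T d ∧ gen ↑X ∩ dmul d (quot T d)ᶜ = ∅ ∧
      (insert d X).gcd id = 1 ∧ T = gen ↑X + dmul d (quot T d) := by
  obtain ⟨N, hN⟩ := hT.exists_forall_ge_mem
  set C := N + d * (N + 1) + 2
  set X := ((Set.finite_Iio C).inter_of_right T).toFinset
  have hX : (X : Set ℕ) = T ∩ Set.Iio C := Set.Finite.coe_toFinset _
  have hmem : ∀ n, N ≤ n → n < C → n ∈ insert d X := fun n h1 h2 =>
    Finset.mem_insert_of_mem (by simp [X, hN n h1, h2])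
  refine ⟨X, ?_, ?_, ?_, ?_⟩
  · exact hX ▸ Set.inter_subset_left.trans (hT.subset_quot d)
  · exact Set.subset_eq_empty (Set.inter_subset_inter_left _
      (hT.gen_subset_s12 (hX ▸ Set.inter_subset_left))) (inter_dmul_compl_quot_eq_empty T d)
  · exact Nat.finset_gcd_eq_one_of_mem_of_succ_mem (hmem N le_rfl (by omega))
      (hmem (N + 1) (by omega) (by omega))
  · rw [hX]
    exact hT.eq_gen_inter_Iio_add_dmul_quot hd hN (by omega)

theorem isNumSgp_gen_add_dmul {S : Set ℕ} (hS : IsNumSgp S) {X : Finset ℕ} {d : ℕ}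
    (hgcd : (insert d X).gcd id = 1) : IsNumSgp (gen X + dmul d S) := by
  set M := AddSubmonoid.closure (X : Set ℕ) ⊔ hS.toAddSubmonoid_s12.map (AddMonoidHom.mulLeft d)
  have hM : (M : Set ℕ) = gen X + dmul d S := by rw [AddSubmonoid.coe_sup]; rfl
  obtain ⟨N, hN⟩ := hS.exists_forall_ge_mem
  have hdmul : ∀ n ≥ N, d * n ∈ M := fun n hn => AddSubmonoid.mem_sup_right ⟨n, hN n hn, rfl⟩
  have hgcdM : Nat.setGcd M ∣ (insert d X).gcd id := by
    refine Finset.dvd_gcd fun x hx => ?_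
    rcases Finset.mem_insert.mp hx with rfl | hx
    · have h := Nat.setGcd_dvd_of_mem (hdmul (N + 1) (by omega))
      rw [mul_add_one] at h
      exact (Nat.dvd_add_right (Nat.setGcd_dvd_of_mem (hdmul N le_rfl))).mp h
    · exact Nat.setGcd_dvd_of_mem
        (AddSubmonoid.mem_sup_left (AddSubmonoid.subset_closure hx) : x ∈ M)
  exact hM ▸ isNumSgp_of_setGcd_eq_one M (Nat.dvd_one.mp (hgcd ▸ hgcdM))

end NumericalSemigroup

theorem stmt12_general (S : Set ℕ) (d : ℕ) (hd : 0 < d)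
    (hS : IsNumSgp S) (T : Set ℕ) :
    (IsNumSgp T ∧ quot T d = S) ↔
      ∃ X : Finset ℕ, ↑X ⊆ S ∧ gen ↑X ∩ dmul d Sᶜ = ∅ ∧
        (insert d X).gcd id = 1 ∧ T = gen ↑X + dmul d S := by
  constructor
  · rintro ⟨hT, rfl⟩
    exact hT.exists_finset_eq_gen_add_dmul_quot hd
  · rintro ⟨X, -, hXS, hgcd, rfl⟩
    exact ⟨isNumSgp_gen_add_dmul hS hgcd,
      quot_add_dmul hd hS.2.1 (AddSubmonoid.zero_mem _) hXS⟩

theorem stmt12 (S : Set ℕ) (d : ℕ) (hd : 0 < d)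
    (hS : IsNumSgp S) (hSne : S ≠ Set.univ) (T : Set ℕ) :
    (IsNumSgp T ∧ quot T d = S) ↔
      ∃ X : Finset ℕ, ↑X ⊆ S ∧ gen ↑X ∩ dmul d Sᶜ = ∅ ∧
        (insert d X).gcd id = 1 ∧ T = gen ↑X + dmul d S :=
  stmt12_general S d hd hS T
end

section
/- Let S be a numerical semigroup, d a positive integer, and x ∈ S with gcd(x,d) = 1 and x ∉ d·S. If T = ⟨x⟩ + d·S (which is a numerical semigroup with T/d = S), then F(T) = (d−1)·x + d·F(S). -/
open scoped Pointwise

/-! Modulo `d`, an element `k * x + d * s` of `T = ⟨x⟩ + d·S` determines `k`, and the least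
coefficient `k < d` can always be used, because `d * x` can be moved into `d·S`. So `n ∈ T` iff
`n = k * x + d * s` with `s ∈ S` for the unique `k < d` with `k * x ≡ n [MOD d]`. For
`n = (d - 1) * x + d * F(S)` this forces `s = F(S) ∉ S`, while for larger `n` the quotient `s`
exceeds `F(S)`. -/
theorem IsNumSgp.mul_mem {S : Set ℕ} (hS : IsNumSgp S) {x : ℕ} (hx : x ∈ S) (m : ℕ) :
    m * x ∈ S := by
  induction m with
  | zero => simpa using hS.1
  | succ m ih => simpa [Nat.succ_mul] using hS.2.1 _ ih _ hx

theorem IsNumSgp.frob_notMem_s14 {S : Set ℕ} (hS : IsNumSgp S) (hSne : S ≠ Set.univ) :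
    Frob S ∉ S :=
  Nat.sSup_mem (Set.nonempty_compl.2 hSne) hS.2.2.bddAbove

theorem IsNumSgp.mem_of_frob_lt_s14 {S : Set ℕ} (hS : IsNumSgp S) {n : ℕ} (hn : Frob S < n) :
    n ∈ S := by
  by_contra h
  exact hn.not_ge (le_csSup hS.2.2.bddAbove h)

theorem frob_eq_of_notMem_of_forall_lt_mem {T : Set ℕ} {N : ℕ} (hN : N ∉ T)
    (h : ∀ n, N < n → n ∈ T) : Frob T = N := by
  have hub : ∀ m ∈ Tᶜ, m ≤ N := fun m hm => not_lt.1 fun hlt => hm (h m hlt)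
  exact le_antisymm (csSup_le ⟨N, hN⟩ hub) (le_csSup ⟨N, hub⟩ hN)

theorem Nat.exists_lt_mul_modEq {d x : ℕ} (hd : 0 < d) (hg : x.Coprime d) (n : ℕ) :
    ∃ k < d, k * x ≡ n [MOD d] := by
  have : NeZero d := ⟨hd.ne'⟩
  refine ⟨((n : ZMod d) * ↑(ZMod.unitOfCoprime x hg)⁻¹).val, ZMod.val_lt _,
    (ZMod.natCast_eq_natCast_iff _ _ _).1 ?_⟩
  rw [Nat.cast_mul, ZMod.natCast_val, ZMod.cast_id, mul_assoc, ← ZMod.coe_unitOfCoprime x hg,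
    Units.inv_mul, mul_one]

section

variable {S : Set ℕ} {d x : ℕ}

theorem mem_gen_singleton_add_dmul_iff {n : ℕ} :
    n ∈ gen {x} + dmul d S ↔ ∃ k, ∃ s ∈ S, n = k * x + d * s := by
  constructor
  · rintro ⟨a, ha, b, ⟨s, hs, rfl⟩, rfl⟩
    obtain ⟨k, rfl⟩ := AddSubmonoid.mem_closure_singleton.1 ha
    exact ⟨k, s, hs, rfl⟩
  · rintro ⟨k, s, hs, rfl⟩
    exact ⟨k * x, AddSubmonoid.mem_closure_singleton.2 ⟨k, rfl⟩, d * s, ⟨s, hs, rfl⟩, rfl⟩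

/-- Since `d * x ∈ d·S`, the coefficient of `x` only matters modulo `d`. -/
theorem mem_gen_singleton_add_dmul_iff_of_modEq (hS : IsNumSgp S) (hx : x ∈ S)
    (hg : x.Coprime d) {n k : ℕ} (hk : k < d) (hkn : k * x ≡ n [MOD d]) :
    n ∈ gen {x} + dmul d S ↔ ∃ s ∈ S, n = k * x + d * s := by
  rw [mem_gen_singleton_add_dmul_iff]
  refine ⟨?_, fun ⟨s, hs, hn⟩ => ⟨k, s, hs, hn⟩⟩
  rintro ⟨k', s, hs, rfl⟩
  have hkk' : k ≡ k' [MOD d] :=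
    Nat.ModEq.cancel_right_of_coprime (Nat.coprime_comm.1 hg) (hkn.trans (by
      simp [Nat.ModEq, Nat.add_mul_mod_self_left]))
  obtain ⟨q, rfl⟩ : ∃ q, k' = k + d * q :=
    ⟨k' / d, by rw [← Nat.mod_eq_of_lt hk, hkk', Nat.mod_add_div]⟩
  exact ⟨q * x + s, hS.2.1 _ (hS.mul_mem hx q) _ hs, by ring⟩

theorem sub_one_mul_add_mul_frob_notMem (hS : IsNumSgp S) (hSne : S ≠ Set.univ) (hx : x ∈ S)
    (hg : x.Coprime d) (hd : 0 < d) :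
    (d - 1) * x + d * Frob S ∉ gen {x} + dmul d S := by
  rw [mem_gen_singleton_add_dmul_iff_of_modEq hS hx hg (Nat.sub_lt hd one_pos)
    (Nat.modEq_iff_dvd' le_self_add |>.2 (by simp))]
  rintro ⟨s, hs, h⟩
  obtain rfl : Frob S = s := Nat.eq_of_mul_eq_mul_left hd (by omega)
  exact hS.frob_notMem_s14 hSne hs

theorem mem_gen_singleton_add_dmul_of_lt (hS : IsNumSgp S) (hx : x ∈ S) (hg : x.Coprime d)
    (hd : 0 < d) {n : ℕ} (hn : (d - 1) * x + d * Frob S < n) : n ∈ gen {x} + dmul d S := by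
  obtain ⟨k, hk, hkn⟩ := Nat.exists_lt_mul_modEq hd hg n
  rw [mem_gen_singleton_add_dmul_iff_of_modEq hS hx hg hk hkn]
  have hkx : k * x ≤ (d - 1) * x := Nat.mul_le_mul_right x (by omega)
  obtain ⟨s, hs⟩ := (Nat.modEq_iff_dvd' (by omega)).1 hkn
  refine ⟨s, hS.mem_of_frob_lt_s14 ?_, by omega⟩
  by_contra! h
  have := Nat.mul_le_mul_left d h
  omega

end

theorem stmt14_general (S : Set ℕ) (d x : ℕ) (hd : 0 < d)
    (hS : IsNumSgp S) (hSne : S ≠ Set.univ)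
    (hx : x ∈ S) (hg : Nat.gcd x d = 1)
    (T : Set ℕ) (hT : T = gen {x} + dmul d S) :
    Frob T = (d - 1) * x + d * Frob S := by
  subst hT
  exact frob_eq_of_notMem_of_forall_lt_mem (sub_one_mul_add_mul_frob_notMem hS hSne hx hg hd)
    fun _ => mem_gen_singleton_add_dmul_of_lt hS hx hg hd

theorem stmt14 (S : Set ℕ) (d x : ℕ) (hd : 0 < d)
    (hS : IsNumSgp S) (hSne : S ≠ Set.univ)
    (hx : x ∈ S) (hg : Nat.gcd x d = 1) (hxd : x ∉ dmul d S)
    (T : Set ℕ) (hT : T = gen {x} + dmul d S) :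
    Frob T = (d - 1) * x + d * Frob S :=
  stmt14_general S d x hd hS hSne hx hg T hT
end

section
/- Let S ≠ ℕ be a numerical semigroup, d a positive integer, and x ∈ S with gcd(x,d) = 1 and x ∉ d·S. If T = ⟨x⟩ + d·S, then PF(T) = {d·f + (d−1)·x : f ∈ PF(S)}. In particular the type of T equals the type of S. -/
open scoped Pointwise

/-!
Since `x ∈ S` and `gcd(x, d) = 1`, every element of `T = ⟨x⟩ + d·S` is uniquely `k·x + d·s` with
`k < d` and `s ∈ S`; in particular `k·x + d·s ∉ T` for `k < d` and `s ∉ S`. For `f ∈ PF(S)` this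
puts `d·f + (d-1)·x` outside `T`, and adding a nonzero `k·x + d·s` to it carries the
`x`-coefficient past `d - 1`, which returns it to `T`.
Conversely, if `z ∈ PF(T)` then `z + x ∈ T \ (x + T)` forces `z + x = d·s'`, and comparing the
`x`-coefficients of `z + d·s ∈ T` shows `s' + s - x ∈ S` for every nonzero `s ∈ S`. Were `s' < x`,
every nonzero element of `S` would lie `x - s'` above another one, so descending from a large
element `g + m(x - s')` would put any gap `g` of `S` in `S`. Hence `f = s' - x` is defined and
lies in `PF(S)`.
-/

section CanonicalForm

variable {S : Set ℕ} {d x : ℕ}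

lemma mem_gen_singleton_add_dmul {t : ℕ} :
    t ∈ gen {x} + dmul d S ↔ ∃ k, ∃ s ∈ S, t = k * x + d * s := by
  simp only [gen, Set.mem_add, SetLike.mem_coe, AddSubmonoid.mem_closure_singleton, dmul,
    Set.mem_image, smul_eq_mul]
  constructor
  · rintro ⟨_, ⟨k, rfl⟩, _, ⟨s, hs, rfl⟩, rfl⟩
    exact ⟨k, s, hs, rfl⟩
  · rintro ⟨k, s, hs, rfl⟩
    exact ⟨_, ⟨k, rfl⟩, _, ⟨s, hs, rfl⟩, rfl⟩

lemma mul_mem_of_mem (h0 : 0 ∈ S) (hadd : ∀ a ∈ S, ∀ b ∈ S, a + b ∈ S) (hx : x ∈ S) :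
    ∀ n, n * x ∈ S
  | 0 => by simpa using h0
  | n + 1 => by simpa [add_mul] using hadd _ (mul_mem_of_mem h0 hadd hx n) _ hx

lemma mem_gen_singleton_add_dmul_iff_lt (hd : 0 < d) (h0 : 0 ∈ S)
    (hadd : ∀ a ∈ S, ∀ b ∈ S, a + b ∈ S) (hx : x ∈ S) {t : ℕ} :
    t ∈ gen {x} + dmul d S ↔ ∃ k < d, ∃ s ∈ S, t = k * x + d * s := by
  rw [mem_gen_singleton_add_dmul]
  constructor
  · rintro ⟨k, s, hs, rfl⟩
    refine ⟨k % d, Nat.mod_lt k hd, s + k / d * x,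
      hadd _ hs _ (mul_mem_of_mem h0 hadd hx _), ?_⟩
    conv_lhs => rw [← Nat.mod_add_div k d]
    ring
  · rintro ⟨k, -, s, hs, rfl⟩
    exact ⟨k, s, hs, rfl⟩

lemma eq_and_eq_of_add_mul_eq (hg : x.Coprime d) {k₁ k₂ s₁ s₂ : ℕ} (h₁ : k₁ < d) (h₂ : k₂ < d)
    (h : k₁ * x + d * s₁ = k₂ * x + d * s₂) : k₁ = k₂ ∧ s₁ = s₂ := by
  have hmod : k₁ * x ≡ k₂ * x [MOD d] := by
    simpa [Nat.ModEq, Nat.add_mul_mod_self_left] using congrArg (· % d) h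
  have hk : k₁ = k₂ := (hmod.cancel_right_of_coprime hg.symm).eq_of_lt_of_lt h₁ h₂
  subst hk
  exact ⟨rfl, Nat.eq_of_mul_eq_mul_left (by omega) (Nat.add_left_cancel h)⟩

end CanonicalForm

lemma Set.eq_univ_of_forall_ne_zero_exists_add {S : Set ℕ} (hfin : Sᶜ.Finite) {c : ℕ}
    (hc : 0 < c) (h : ∀ s ∈ S, s ≠ 0 → ∃ u ∈ S, s = u + c) : S = Set.univ := by
  have descend : ∀ g m, g + m * c ∈ S → g ∈ S := by
    intro g m
    induction m with
    | zero => simp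
    | succ m ih =>
      intro hm
      obtain ⟨u, hu, hsu⟩ := h _ hm (by positivity)
      exact ih (by rwa [show g + m * c = u by linarith])
  obtain ⟨N, hN⟩ := hfin.bddAbove
  refine Set.eq_univ_of_forall fun g => descend g (N + 1) (by_contra fun hg => ?_)
  have := hN hg
  nlinarith

section PseudoFrobenius

variable {S : Set ℕ} {d x : ℕ} (hd : 0 < d) (h0 : 0 ∈ S)
  (hadd : ∀ a ∈ S, ∀ b ∈ S, a + b ∈ S) (hx : x ∈ S) (hg : x.Coprime d)
include hd h0 hadd hx hg

lemma add_mul_mem_PF_of_mem_PF {f : ℕ} (hf : f ∈ PF S) :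
    d * f + (d - 1) * x ∈ PF (gen {x} + dmul d S) := by
  obtain ⟨hfS, hfadd⟩ := hf
  obtain ⟨e, rfl⟩ := Nat.exists_eq_add_one_of_ne_zero hd.ne'
  rw [Nat.add_sub_cancel]
  refine ⟨fun hz => ?_, fun t ht ht0 => ?_⟩
  · obtain ⟨k, hk, s, hs, hks⟩ := (mem_gen_singleton_add_dmul_iff_lt hd h0 hadd hx).1 hz
    have hsf := (eq_and_eq_of_add_mul_eq hg (lt_add_one e) hk
      (show e * x + (e + 1) * f = k * x + (e + 1) * s by linarith)).2
    exact hfS (hsf ▸ hs)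
  obtain ⟨k, s, hs, rfl⟩ := mem_gen_singleton_add_dmul.1 ht
  rcases eq_or_ne s 0 with rfl | hs0
  · obtain ⟨m, rfl⟩ := Nat.exists_eq_add_one_of_ne_zero (show k ≠ 0 by rintro rfl; simp at ht0)
    refine mem_gen_singleton_add_dmul.2 ⟨m, f + x, hfadd x hx (by rintro rfl; simp at ht0), ?_⟩
    ring
  · exact mem_gen_singleton_add_dmul.2 ⟨e + k, f + s, hfadd s hs hs0, by ring⟩

lemma exists_eq_of_mem_PF (hfin : Sᶜ.Finite) (hSne : S ≠ Set.univ) (hx0 : x ≠ 0) {z : ℕ}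
    (hz : z ∈ PF (gen {x} + dmul d S)) : ∃ f ∈ PF S, z = d * f + (d - 1) * x := by
  obtain ⟨hzT, hzadd⟩ := hz
  have memT {t : ℕ} := mem_gen_singleton_add_dmul_iff_lt (t := t) hd h0 hadd hx
  obtain ⟨e, rfl⟩ := Nat.exists_eq_add_one_of_ne_zero hd.ne'
  obtain ⟨k, -, s', hs', hzx⟩ :=
    memT.1 (hzadd x (mem_gen_singleton_add_dmul.2 ⟨1, 0, h0, by ring⟩) hx0)
  obtain rfl : k = 0 := by
    by_contra hk
    obtain ⟨m, rfl⟩ := Nat.exists_eq_add_one_of_ne_zero hk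
    exact hzT (mem_gen_singleton_add_dmul.2 ⟨m, s', hs', by linarith⟩)
  -- `z + d·s` must have `x`-coefficient `d - 1`, the only one that absorbs the extra `x` of `d·s'`.
  have shift : ∀ s ∈ S, s ≠ 0 → ∃ u ∈ S, s' + s = u + x := by
    intro s hs hs0
    obtain ⟨k, hk, u, hu, hzs⟩ := memT.1
      (hzadd ((e + 1) * s) (mem_gen_singleton_add_dmul.2 ⟨0, s, hs, by ring⟩) (by positivity))
    obtain rfl : k = e := by
      by_contra hke
      have := eq_and_eq_of_add_mul_eq hg (k₁ := 0) (by omega) (show k + 1 < e + 1 by omega)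
        (show 0 * x + (e + 1) * (s' + s) = (k + 1) * x + (e + 1) * u by linarith)
      omega
    exact ⟨u, hu, Nat.eq_of_mul_eq_mul_left hd (by linarith)⟩
  have hxs' : x ≤ s' := by
    by_contra hlt
    refine hSne (Set.eq_univ_of_forall_ne_zero_exists_add hfin (c := x - s') (by omega)
      fun s hs hs0 => ?_)
    obtain ⟨u, hu, hsu⟩ := shift s hs hs0
    exact ⟨u, hu, by omega⟩
  obtain ⟨f, rfl⟩ := Nat.exists_eq_add_of_le' hxs'
  have hzf : z = (e + 1) * f + e * x := by linarith
  refine ⟨f, ⟨fun hf => hzT ?_, fun s hs hs0 => ?_⟩, by simpa using hzf⟩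
  · exact mem_gen_singleton_add_dmul.2 ⟨e, f, hf, by rw [hzf]; ring⟩
  · obtain ⟨u, hu, hsu⟩ := shift s hs hs0
    rwa [show f + s = u by omega]

end PseudoFrobenius

theorem stmt16 (S : Set ℕ) (d x : ℕ) (hd : 0 < d)
    (hS : IsNumSgp S) (hSne : S ≠ Set.univ)
    (hx : x ∈ S) (hg : Nat.gcd x d = 1) (hxd : x ∉ dmul d S)
    (T : Set ℕ) (hT : T = gen {x} + dmul d S) :
    PF T = {y | ∃ f ∈ PF S, y = d * f + (d - 1) * x} ∧
      (PF T).ncard = (PF S).ncard := by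
  obtain ⟨h0, hadd, hfin⟩ := hS
  have hx0 : x ≠ 0 := by
    rintro rfl
    exact hxd ⟨0, h0, mul_zero d⟩
  have hPF : PF T = (fun f => d * f + (d - 1) * x) '' PF S := by
    subst hT
    ext z
    refine ⟨fun hz => ?_, ?_⟩
    · obtain ⟨f, hf, rfl⟩ := exists_eq_of_mem_PF hd h0 hadd hx hg hfin hSne hx0 hz
      exact ⟨f, hf, rfl⟩
    · rintro ⟨f, hf, rfl⟩
      exact add_mul_mem_PF_of_mem_PF hd h0 hadd hx hg hf
  refine ⟨by rw [hPF]; ext; simp [eq_comm], ?_⟩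
  rw [hPF, Set.ncard_image_of_injective]
  exact fun a b hab => Nat.eq_of_mul_eq_mul_left hd (Nat.add_right_cancel hab)
end

section
/- Let S be a numerical semigroup with minimal generating set {a_1, …, a_e}. Suppose for every i ∈ {1,…,e} that (Σ_{j≠i} a_j) − a_i ∉ S. Then for every nonempty J ⊆ {1,…,e} and nonnegative integers u_j (j ∉ J) not all zero, Σ_{j∈J} a_j ≠ Σ_{j∉J} u_j a_j; consequently S has full quotient rank, i.e., every numerical semigroup T with T/d = S for some d ≥ 1 has embedding dimension at least e. -/
open scoped Pointwise

/-!
The hypothesis says that no `s ∈ S` satisfies `s + 2 a_i = ∑_j a_j`, and both claims reduce to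
producing such an `s`. A relation `∑_{j ∈ J} a_j = ∑_{j ∉ J} u_j a_j` with `u_i > 0` gives
`∑_j a_j = ∑_{j ∉ J} (u_j + 1) a_j`, where `a_i` has coefficient at least 2.
If `T / d = S`, write every `d a_i` in the minimal generators of `T`. Should no generator carry in
`d a_i` more than half of its coefficient in `d ∑_j a_j`, the difference `d (∑_j a_j - 2 a_i)`
lies in `T`, so `∑_j a_j - 2 a_i ∈ S`. Hence each `i` holds a strict majority at some generator,
and distinct `i` hold it at distinct generators.
-/

namespace IsNumSgp

variable {S : Set ℕ}

lemma mul_mem_s18 (hS : IsNumSgp S) (n : ℕ) {x : ℕ} (hx : x ∈ S) : n * x ∈ S := by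
  induction n with
  | zero => simpa using hS.1
  | succ n ih => rw [Nat.succ_mul]; exact hS.2.1 _ ih _ hx

lemma sum_mem (hS : IsNumSgp S) {ι : Type*} (G : Finset ι) {f : ι → ℕ}
    (hf : ∀ j ∈ G, f j ∈ S) : ∑ j ∈ G, f j ∈ S :=
  Finset.sum_induction f (· ∈ S) (fun x y hx hy => hS.2.1 x hx y hy) hS.1 hf

lemma exists_add_sum_mul_eq_of_le (hS : IsNumSgp S) {ι : Type*} {G : Finset ι}
    {b : ι → ℕ} (hb : ∀ g ∈ G, b g ∈ S) {v w : ι → ℕ} (hwv : ∀ g ∈ G, w g ≤ v g) :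
    ∃ s ∈ S, s + ∑ g ∈ G, w g * b g = ∑ g ∈ G, v g * b g := by
  refine ⟨∑ g ∈ G, (v g - w g) * b g, hS.sum_mem G fun g hg => hS.mul_mem_s18 _ (hb g hg), ?_⟩
  rw [← Finset.sum_add_distrib]
  refine Finset.sum_congr rfl fun g hg => ?_
  rw [← add_mul, Nat.sub_add_cancel (hwv g hg)]

lemma msg_finite (hS : IsNumSgp S) : (msg S).Finite := by
  obtain ⟨N, hN⟩ := hS.2.2.bddAbove
  have hmem : ∀ x, N < x → x ∈ S := fun x hx => by_contra fun h => absurd (hN h) (by omega)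
  refine (Set.finite_Iic (2 * N + 2)).subset fun x hx => ?_
  by_contra! hxN
  rw [Set.mem_Iic, not_le] at hxN
  exact hx.2.2 (N + 1) (hmem _ (by omega)) (x - (N + 1)) (hmem _ (by omega))
    (by omega) (by omega) (by omega)

end IsNumSgp

lemma exists_eq_sum_mul_of_msg_subset {T : Set ℕ} {G : Finset ℕ} (hG : msg T ⊆ G) :
    ∀ t ∈ T, ∃ c : ℕ → ℕ, t = ∑ g ∈ G, c g * g := by
  intro t
  induction t using Nat.strong_induction_on with
  | _ t ih =>
    intro ht
    by_cases h0 : t = 0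
    · exact ⟨0, by simp [h0]⟩
    by_cases hmsg : t ∈ msg T
    · exact ⟨fun g => if g = t then 1 else 0, by simp [Finset.mem_coe.mp (hG hmsg)]⟩
    obtain ⟨x, hx, y, hy, hx0, hy0, rfl⟩ : ∃ x ∈ T, ∃ y ∈ T, x ≠ 0 ∧ y ≠ 0 ∧ x + y = t := by
      simpa [msg, ht, h0] using hmsg
    obtain ⟨cx, rfl⟩ := ih x (by omega) hx
    obtain ⟨cy, rfl⟩ := ih y (by omega) hy
    exact ⟨cx + cy, by simp only [Pi.add_apply, add_mul, Finset.sum_add_distrib]⟩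

lemma injective_of_sum_lt_two_mul {ι κ : Type*} [Fintype ι] (c : ι → κ → ℕ) (f : ι → κ)
    (hf : ∀ i, ∑ j, c j (f i) < 2 * c i (f i)) : Function.Injective f := by
  classical
  intro i i' hii'
  by_contra hne
  have hpair : c i (f i') + c i' (f i') ≤ ∑ j, c j (f i') := by
    simpa only [Finset.sum_pair hne] using
      Finset.sum_le_sum_of_subset (f := fun j => c j (f i')) (Finset.subset_univ {i, i'})
  have := hf i
  have := hf i'
  rw [hii'] at *
  omega

lemma exists_mem_quot_add_eq {T : Set ℕ} {d t x y : ℕ} (hd : 0 < d) (ht : t ∈ T)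
    (h : t + d * y = d * x) : ∃ s ∈ quot T d, s + y = x := by
  have hyx : y ≤ x := Nat.le_of_mul_le_mul_left (by omega) hd
  refine ⟨x - y, ?_, by omega⟩
  show d * (x - y) ∈ T
  rwa [Nat.mul_sub, ← h, Nat.add_sub_cancel]

lemma add_two_mul_eq_sum_iff {ι : Type*} [Fintype ι] [DecidableEq ι] (a : ι → ℕ) (i : ι)
    (s : ℕ) : s + 2 * a i = ∑ j, a j ↔ s + a i = ∑ j ∈ Finset.univ.erase i, a j := by
  rw [← Finset.add_sum_erase _ a (Finset.mem_univ i)]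
  omega

lemma IsNumSgp.sum_ne_sum_compl_mul {S : Set ℕ} (hS : IsNumSgp S) {ι : Type*} [Fintype ι]
    [DecidableEq ι] (a : ι → ℕ) (ha : ∀ i, a i ∈ S)
    (hap : ∀ i, ¬ ∃ s ∈ S, s + 2 * a i = ∑ j, a j) (J : Finset ι) (u : ι → ℕ)
    (hu : ∃ i ∈ Jᶜ, u i ≠ 0) : ∑ j ∈ J, a j ≠ ∑ j ∈ Jᶜ, u j * a j := by
  obtain ⟨i, hi, hui⟩ := hu
  intro hrel
  have hsum : ∑ j, a j = ∑ j ∈ Jᶜ, (u j + 1) * a j := by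
    rw [← Finset.sum_add_sum_compl J, hrel, ← Finset.sum_add_distrib]
    simp only [add_mul, one_mul]
  obtain ⟨s, hs, hs'⟩ := hS.exists_add_sum_mul_eq_of_le (G := Jᶜ) (fun j _ => ha j)
    (w := fun j => if j = i then 2 else 0) (v := fun j => u j + 1)
    (fun j _ => by split_ifs with hj <;> [subst hj; skip] <;> omega)
  simp only [ite_mul, zero_mul, Finset.sum_ite_eq', hi, if_true] at hs'
  exact hap i ⟨s, hs, hs'.trans hsum.symm⟩

lemma card_le_ncard_msg_of_quot_eq {ι : Type*} [Fintype ι] {S T : Set ℕ} (a : ι → ℕ)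
    (ha : ∀ i, a i ∈ S) (hap : ∀ i, ¬ ∃ s ∈ S, s + 2 * a i = ∑ j, a j) (hT : IsNumSgp T)
    {d : ℕ} (hd : 0 < d) (hTS : quot T d = S) : Fintype.card ι ≤ (msg T).ncard := by
  set G := hT.msg_finite.toFinset
  have hGT : ∀ g ∈ G, id g ∈ T := fun g hg => (hT.msg_finite.mem_toFinset.mp hg).1
  have hdaT : ∀ i, d * a i ∈ T := fun i => show a i ∈ quot T d from hTS ▸ ha i
  choose c hc using fun i =>
    exists_eq_sum_mul_of_msg_subset hT.msg_finite.coe_toFinset.ge _ (hdaT i)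
  have hmajority : ∀ i, ∃ g ∈ G, ∑ j, c j g < 2 * c i g := by
    intro i
    by_contra! hle
    obtain ⟨t, ht, hteq⟩ := hT.exists_add_sum_mul_eq_of_le hGT hle
    have hsum : ∑ g ∈ G, (∑ j, c j g) * id g = d * ∑ j, a j := by
      simp only [id, Finset.sum_mul, Finset.mul_sum, hc]
      exact Finset.sum_comm
    have htwice : ∑ g ∈ G, 2 * c i g * id g = d * (2 * a i) := by
      rw [mul_left_comm, hc i, Finset.mul_sum]
      simp only [id, mul_assoc, G]
    rw [hsum, htwice] at hteq
    obtain ⟨s, hs, hs'⟩ := exists_mem_quot_add_eq hd ht hteq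
    exact hap i ⟨s, hTS ▸ hs, hs'⟩
  choose f hfG hf using hmajority
  calc Fintype.card ι = Finset.univ.card := rfl
    _ ≤ G.card := Finset.card_le_card_of_injOn f (fun i _ => hfG i)
        (injective_of_sum_lt_two_mul c f hf).injOn
    _ = (msg T).ncard := (Set.ncard_eq_toFinset_card _ _).symm

theorem stmt18_general (S : Set ℕ) (e : ℕ) (a : Fin e → ℕ)
    (hS : IsNumSgp S)
    (hmsg : msg S = Set.range a)
    (hap : ∀ i : Fin e, ¬ ∃ s ∈ S, s + a i = ∑ j ∈ Finset.univ.erase i, a j) :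
    (∀ J : Finset (Fin e), J.Nonempty → ∀ u : Fin e → ℕ,
        (∃ i ∈ Jᶜ, u i ≠ 0) → ∑ j ∈ J, a j ≠ ∑ j ∈ Jᶜ, u j * a j)
    ∧ ∀ d : ℕ, 0 < d → ∀ T : Set ℕ, IsNumSgp T → quot T d = S →
        e ≤ (msg T).ncard := by
  have ha : ∀ i, a i ∈ S := fun i => (hmsg ▸ Set.mem_range_self i : a i ∈ msg S).1
  have hap' : ∀ i, ¬ ∃ s ∈ S, s + 2 * a i = ∑ j, a j := by
    simpa only [add_two_mul_eq_sum_iff] using hap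
  refine ⟨fun J _ u hu => hS.sum_ne_sum_compl_mul a ha hap' J u hu,
    fun d hd T hT hTS => ?_⟩
  simpa using card_le_ncard_msg_of_quot_eq a ha hap' hT hd hTS

theorem stmt18 (S : Set ℕ) (e : ℕ) (a : Fin e → ℕ)
    (hS : IsNumSgp S) (hinj : Function.Injective a)
    (hmsg : msg S = Set.range a)
    (hap : ∀ i : Fin e, ¬ ∃ s ∈ S, s + a i = ∑ j ∈ Finset.univ.erase i, a j) :
    (∀ J : Finset (Fin e), J.Nonempty → ∀ u : Fin e → ℕ,
        (∃ i ∈ Jᶜ, u i ≠ 0) → ∑ j ∈ J, a j ≠ ∑ j ∈ Jᶜ, u j * a j)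
    ∧ ∀ d : ℕ, 0 < d → ∀ T : Set ℕ, IsNumSgp T → quot T d = S →
        e ≤ (msg T).ncard :=
  stmt18_general S e a hS hmsg hap
end

section
/- Let S be a numerical semigroup with minimal generating set {a_1 < a_2 < … < a_e}. If for every i ∈ {1,…,e} one has (Σ_{j≠i} a_j) − a_i ∉ S, then a_1 ≥ 2^{e−1}. -/
open scoped Pointwise

open Finset

/-!
Fix `i`. If `i ∉ J` and `∑ j ∈ J, a j - a i ∈ S`, adding the generators outside `J ∪ {i}` gives
`∑ j ≠ i, a j - a i ∈ S`; so every subset sum of `{a j : j ≠ i}` lies in the Apéry set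
`Ap(S, a i)`. These sums are pairwise distinct: if `∑ A = ∑ B` with `A`, `B` disjoint and
`k ∈ A`, the sum over `B ∪ A.erase k` is `a k + 2 ∑ (A.erase k)`, against the first remark at `k`.
Distinct elements of `Ap(S, a i)` are incongruent modulo `a i`, so the `2 ^ (e - 1)` subset sums
need `2 ^ (e - 1)` residues.
-/

/-- The Apéry set `Ap(M, n) = {s ∈ M | s - n ∉ M}`, stated without subtraction. -/
def aperySet {G : Type*} [AddMonoid G] (M : AddSubmonoid G) (n : G) : Set G :=
  {s | s ∈ M ∧ ∀ t ∈ M, t + n ≠ s}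

theorem ne_zero_of_mem_aperySet {G : Type*} [AddMonoid G] {M : AddSubmonoid G} {n s : G}
    (hs : s ∈ aperySet M n) : n ≠ 0 := by
  rintro rfl
  exact hs.2 s hs.1 (add_zero s)

theorem Nat.eq_of_mem_aperySet_of_modEq {M : AddSubmonoid ℕ} {n x y : ℕ} (hn : n ∈ M)
    (hx : x ∈ aperySet M n) (hy : y ∈ aperySet M n) (h : x ≡ y [MOD n]) : x = y := by
  wlog hxy : x ≤ y generalizing x y
  · exact (this hy hx h.symm (le_of_not_ge hxy)).symm
  obtain ⟨m, hm⟩ := (Nat.modEq_iff_dvd' hxy).1 h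
  rcases m with _ | k
  · omega
  · have hk : x + n * k ∈ M := M.add_mem hx.1 (by simpa [mul_comm] using M.nsmul_mem hn k)
    have : n * (k + 1) = n * k + n := Nat.mul_succ n k
    exact absurd (by omega) (hy.2 _ hk)

section SubsetSums

variable {ι G : Type*} [Fintype ι] [DecidableEq ι] [AddCommMonoid G] {M : AddSubmonoid G}
  {a : ι → G}

theorem sum_mem_aperySet (ha : ∀ j, a j ∈ M)
    (hap : ∀ i, ∑ j ∈ univ.erase i, a j ∈ aperySet M (a i))
    {i : ι} {J : Finset ι} (hiJ : i ∉ J) : ∑ j ∈ J, a j ∈ aperySet M (a i) := by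
  refine ⟨M.sum_mem fun j _ => ha j, fun t ht h => ?_⟩
  have hJ : J ⊆ univ.erase i := fun j hj => mem_erase.2 ⟨ne_of_mem_of_not_mem hj hiJ, mem_univ j⟩
  refine (hap i).2 (t + ∑ j ∈ univ.erase i \ J, a j) (M.add_mem ht (M.sum_mem fun j _ => ha j)) ?_
  rw [← sum_sdiff hJ, add_right_comm, h, add_comm]

theorem eq_empty_of_sum_eq_sum_of_disjoint (ha : ∀ j, a j ∈ M)
    (hap : ∀ i, ∑ j ∈ univ.erase i, a j ∈ aperySet M (a i))
    {A B : Finset ι} (hAB : Disjoint A B) (h : ∑ j ∈ A, a j = ∑ j ∈ B, a j) : A = ∅ := by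
  by_contra hA
  obtain ⟨i, hi⟩ := nonempty_iff_ne_empty.2 hA
  have hiB : i ∉ B := disjoint_left.1 hAB hi
  have hdisj : Disjoint B (A.erase i) := hAB.symm.mono_right (erase_subset i A)
  have hmem := sum_mem_aperySet ha hap (i := i) (J := B ∪ A.erase i) (by simp [hiB])
  refine hmem.2 (∑ j ∈ A.erase i, a j + ∑ j ∈ A.erase i, a j)
    (M.add_mem (M.sum_mem fun j _ => ha j) (M.sum_mem fun j _ => ha j)) ?_
  rw [sum_union hdisj, ← h, ← add_sum_erase A a hi]
  ac_rfl

end SubsetSums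

theorem sum_injective {ι G : Type*} [Fintype ι] [DecidableEq ι] [AddCancelCommMonoid G]
    {M : AddSubmonoid G} {a : ι → G} (ha : ∀ j, a j ∈ M)
    (hap : ∀ i, ∑ j ∈ univ.erase i, a j ∈ aperySet M (a i)) :
    Function.Injective fun J : Finset ι => ∑ j ∈ J, a j := by
  intro J K h
  have hJ := sum_inter_add_sum_sdiff J K a
  have hK := sum_inter_add_sum_sdiff K J a
  rw [inter_comm] at hK
  have hdiff : ∑ j ∈ J \ K, a j = ∑ j ∈ K \ J, a j :=
    add_left_cancel (hJ.trans (h.trans hK.symm))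
  have hJK := eq_empty_of_sum_eq_sum_of_disjoint ha hap disjoint_sdiff_sdiff hdiff
  have hKJ := eq_empty_of_sum_eq_sum_of_disjoint ha hap disjoint_sdiff_sdiff hdiff.symm
  exact Subset.antisymm (sdiff_eq_empty_iff_subset.1 hJK) (sdiff_eq_empty_iff_subset.1 hKJ)

theorem two_pow_card_sub_one_le {ι : Type*} [Fintype ι] [DecidableEq ι] {M : AddSubmonoid ℕ}
    {a : ι → ℕ} (ha : ∀ j, a j ∈ M) (hap : ∀ i, ∑ j ∈ univ.erase i, a j ∈ aperySet M (a i))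
    (i : ι) : 2 ^ (Fintype.card ι - 1) ≤ a i := by
  have hmaps : Set.MapsTo (fun J : Finset ι => (∑ j ∈ J, a j) % a i)
      (univ.erase i).powerset (range (a i)) :=
    fun _ _ => mem_range.2 (Nat.mod_lt _ (Nat.pos_of_ne_zero (ne_zero_of_mem_aperySet (hap i))))
  have hinj : Set.InjOn (fun J : Finset ι => (∑ j ∈ J, a j) % a i) (univ.erase i).powerset := by
    intro J hJ K hK hmod
    simp only [coe_powerset, Set.mem_preimage, Set.mem_powerset_iff, coe_subset,
      subset_erase, subset_univ, true_and] at hJ hK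
    exact sum_injective ha hap <| Nat.eq_of_mem_aperySet_of_modEq (ha i)
      (sum_mem_aperySet ha hap hJ) (sum_mem_aperySet ha hap hK) hmod
  simpa [card_powerset, card_erase_of_mem] using card_le_card_of_injOn _ hmaps hinj

theorem stmt19_general (S : Set ℕ) (e : ℕ) (he : 0 < e) (a : Fin e → ℕ)
    (hS : IsNumSgp S)
    (hmsg : msg S = Set.range a)
    (hap : ∀ i : Fin e, ¬ ∃ s ∈ S, s + a i = ∑ j ∈ Finset.univ.erase i, a j) :
    2 ^ (e - 1) ≤ a ⟨0, he⟩ := by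
  let M : AddSubmonoid ℕ := ⟨⟨S, fun {x y} hx hy => hS.2.1 x hx y hy⟩, hS.1⟩
  have ha : ∀ j, a j ∈ M := fun j => (hmsg ▸ Set.mem_range_self j : a j ∈ msg S).1
  have hapery : ∀ i, ∑ j ∈ univ.erase i, a j ∈ aperySet M (a i) :=
    fun i => ⟨M.sum_mem fun j _ => ha j, fun t ht h => hap i ⟨t, ht, h⟩⟩
  simpa using two_pow_card_sub_one_le ha hapery ⟨0, he⟩

theorem stmt19 (S : Set ℕ) (e : ℕ) (he : 0 < e) (a : Fin e → ℕ)
    (hS : IsNumSgp S) (hmono : StrictMono a)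
    (hmsg : msg S = Set.range a)
    (hap : ∀ i : Fin e, ¬ ∃ s ∈ S, s + a i = ∑ j ∈ Finset.univ.erase i, a j) :
    2 ^ (e - 1) ≤ a ⟨0, he⟩ :=
  stmt19_general S e he a hS hmsg hap
end
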